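/- For any policy π, the values of the pessimistic augmented MDP M† and the original MDP M satisfy the sandwich inequality: v^π − Σ_{h=2}^{H+1} Σ_{t=1}^{h−1} Σ_{(s_t,a_t)∈S×A∖C_t} d^π_t(s_t,a_t) ≤ v^π − Σ_{h=2}^{H+1} d^{†π}_h(s†_h) ≤ v^{†π} ≤ v^π. -/

import Mathlib

open MeasureTheory Finset
open scoped BigOperators ENNReal Classical

noncomputable section

/-- A finite-horizon (time-inhomogeneous) Markov Decision Process with finite state space `S`,
finite action space `A`, horizon `H`, transition kernels `P h s a : S → ℝ`, random rewards with
distribution `R h s a : PMF ℝ` supported in `[0,1]`, and initial distribution `d1`.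
Time steps are indexed `h ∈ {1, …, H}`. -/
structure FinMDP (S A : Type) [Fintype S] [Fintype A] where
  H : ℕ
  P : ℕ → S → A → S → ℝ
  R : ℕ → S → A → PMF ℝ
  d1 : S → ℝ
  P_nonneg : ∀ h s a s', 0 ≤ P h s a s'
  P_sum : ∀ h s a, ∑ s', P h s a s' = 1
  R_mem : ∀ h s a, ∀ x ∈ (R h s a).support, x ∈ Set.Icc (0 : ℝ) 1
  d1_nonneg : ∀ s, 0 ≤ d1 s
  d1_sum : ∑ s, d1 s = 1

/-- A (Markovian, time-dependent) policy. -/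
structure Policy (S A : Type) [Fintype A] where
  p : ℕ → S → A → ℝ
  nonneg : ∀ h s a, 0 ≤ p h s a
  sum_one : ∀ h s, ∑ a, p h s a = 1

/-- Mean of a real-valued PMF. -/
def pmfMean (q : PMF ℝ) : ℝ := ∑' x, (q x).toReal * x

/-- Variance of a real-valued PMF. -/
def pmfVarR (q : PMF ℝ) : ℝ := ∑' x, (q x).toReal * (x - pmfMean q) ^ 2

/-- Expectation of `f` under a PMF. -/
def pmfExp {τ : Type} (q : PMF τ) (f : τ → ℝ) : ℝ := ∑' t, (q t).toReal * f t

/-- Variance of `f` under a PMF. -/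
def pmfVar {τ : Type} (q : PMF τ) (f : τ → ℝ) : ℝ := pmfExp q fun t => (f t - pmfExp q f) ^ 2

/-- Squared Hellinger distance between two PMFs. -/
def hellSq {τ : Type} (q q' : PMF τ) : ℝ := 1 - ∑' t, Real.sqrt ((q t).toReal * (q' t).toReal)

/-- Probability of an event under a PMF. -/
def prEvent {τ : Type} (q : PMF τ) (E : Set τ) : ℝ≥0∞ := q.toOuterMeasure E

/-- Variance of `f` under a finitely supported distribution given by a weight function `p`. -/
def varDist {τ : Type} [Fintype τ] (p f : τ → ℝ) : ℝ :=
  ∑ t, p t * (f t - ∑ t', p t' * f t') ^ 2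

/-- Squared Hellinger distance between two finitely supported distributions. -/
def hellFin {τ : Type} [Fintype τ] (p q : τ → ℝ) : ℝ := 1 - ∑ t, Real.sqrt (p t * q t)

variable {S A : Type} [Fintype S] [Fintype A]

/-- Mean reward at `(h, s, a)`. -/
def meanR (M : FinMDP S A) (h : ℕ) (s : S) (a : A) : ℝ := pmfMean (M.R h s a)

/-- Reward variance at `(h, s, a)`. -/
def varR (M : FinMDP S A) (h : ℕ) (s : S) (a : A) : ℝ := pmfVarR (M.R h s a)

/-- `Var_{P_h(·|s,a)}(r_h + V)`: variance of the (conditionally independent) random reward plus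
next-state value `V` given `(s,a)` at step `h`. -/
def varTot (M : FinMDP S A) (h : ℕ) (s : S) (a : A) (V : S → ℝ) : ℝ :=
  varR M h s a + varDist (M.P h s a) V

/-- Value function `V^π_h`, with `V^π_{H+1} = 0`. -/
def Vpi (M : FinMDP S A) (π : Policy S A) (h : ℕ) : S → ℝ :=
  if hh : M.H + 1 ≤ h then fun _ => 0
  else fun s => ∑ a, π.p h s a * (meanR M h s a + ∑ s', M.P h s a s' * Vpi M π (h + 1) s')
termination_by M.H + 1 - h
decreasing_by omega

/-- Q-value function `Q^π_h`. -/
def Qpi (M : FinMDP S A) (π : Policy S A) (h : ℕ) (s : S) (a : A) : ℝ :=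
  meanR M h s a + ∑ s', M.P h s a s' * Vpi M π (h + 1) s'

/-- Performance `v^π = E_{s₁ ∼ d₁}[V^π_1(s₁)]`. -/
def vOf (M : FinMDP S A) (π : Policy S A) : ℝ := ∑ s, M.d1 s * Vpi M π 1 s

/-- `π` is an optimal policy: it dominates every policy at every step and state. -/
def IsOptimal (M : FinMDP S A) (π : Policy S A) : Prop :=
  ∀ (π' : Policy S A) (h : ℕ) (s : S), Vpi M π' h s ≤ Vpi M π h s

/-- Optimal value `v⋆`. -/
def vstar (M : FinMDP S A) : ℝ := ⨆ π : Policy S A, vOf M π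

/-- Marginal state distribution `d^π_h(s)` (1-indexed; `dState 1 = d₁`). -/
def dState (M : FinMDP S A) (π : Policy S A) : ℕ → S → ℝ
  | 0 => fun _ => 0
  | 1 => M.d1
  | h + 2 => fun s' => ∑ s, ∑ a, dState M π (h + 1) s * π.p (h + 1) s a * M.P (h + 1) s a s'

/-- Marginal state-action occupancy `d^π_h(s,a)`. -/
def dOcc (M : FinMDP S A) (π : Policy S A) (h : ℕ) (s : S) (a : A) : ℝ :=
  dState M π h s * π.p h s a

/-- Marginal state distribution at time `t` of the process started at state `s0` at time `h0`. -/
def dStateFrom [DecidableEq S] (M : FinMDP S A) (π : Policy S A) (h0 : ℕ) (s0 : S) (t : ℕ) :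
    S → ℝ :=
  if ht : t ≤ h0 then fun s => if s = s0 then 1 else 0
  else fun s' => ∑ s, ∑ a, dStateFrom M π h0 s0 (t - 1) s * π.p (t - 1) s a * M.P (t - 1) s a s'
termination_by t
decreasing_by omega

/-- `d̄_m`: minimal positive marginal state-action probability of the behavior policy. -/
def dbar (M : FinMDP S A) (μ : Policy S A) : ℝ :=
  sInf {x : ℝ | ∃ h ∈ Finset.Icc 1 M.H, ∃ s a, 0 < dOcc M μ h s a ∧ x = dOcc M μ h s a}

/-- `(s,a)` is reachable at step `h` by some policy. -/
def Reachable (M : FinMDP S A) (h : ℕ) (s : S) (a : A) : Prop :=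
  ∃ π : Policy S A, 0 < dOcc M π h s a

/-- `d_m`: minimal behavior probability over all reachable state-action pairs. -/
def dmin (M : FinMDP S A) (μ : Policy S A) : ℝ :=
  sInf {x : ℝ | ∃ h ∈ Finset.Icc 1 M.H, ∃ s a, Reachable M h s a ∧ x = dOcc M μ h s a}

/-- The class `𝒢`: there is an optimal policy covered by the behavior policy `μ`. -/
def inG (μ : Policy S A) (M : FinMDP S A) : Prop :=
  ∃ π : Policy S A, IsOptimal M π ∧ ∀ h s a, 0 < dOcc M π h s a → 0 < dOcc M μ h s a

/-- `ι = log(H·S·A/δ)`. -/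
def iotaLog (H nS nA : ℕ) (δ : ℝ) : ℝ := Real.log (H * nS * nA / δ)

/-- A trajectory (episode): list of `(state, action, reward)` steps plus a final state. -/
structure Traj (S A : Type) where
  steps : List (S × A × ℝ)
  final : S

/-- PMF attached to a finitely supported real distribution. -/
def finPMF {τ : Type} [Fintype τ] (p : τ → ℝ) (h0 : ∀ t, 0 ≤ p t) (h1 : ∑ t, p t = 1) : PMF τ :=
  PMF.ofFintype (fun t => ENNReal.ofReal (p t))
    (by rw [← ENNReal.ofReal_sum_of_nonneg (fun t _ => h0 t), h1, ENNReal.ofReal_one])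

def actPMF (M : FinMDP S A) (π : Policy S A) (h : ℕ) (s : S) : PMF A :=
  finPMF (π.p h s) (π.nonneg h s) (π.sum_one h s)

def transPMF (M : FinMDP S A) (h : ℕ) (s : S) (a : A) : PMF S :=
  finPMF (M.P h s a) (M.P_nonneg h s a) (M.P_sum h s a)

def initPMF (M : FinMDP S A) : PMF S := finPMF M.d1 M.d1_nonneg M.d1_sum

/-- Law of the trajectory generated by `π` starting at state `s` at time `h`, for `k` steps. -/
def trajFrom (M : FinMDP S A) (π : Policy S A) : ℕ → ℕ → S → PMF (Traj S A)
  | _, 0, s => PMF.pure ⟨[], s⟩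
  | h, k + 1, s =>
      (actPMF M π h s).bind fun a =>
        (M.R h s a).bind fun r =>
          (transPMF M h s a).bind fun s' =>
            (trajFrom M π (h + 1) k s').map fun T => ⟨(s, a, r) :: T.steps, T.final⟩

/-- Law of a full episode generated by the behavior policy `μ`. -/
def episodePMF (M : FinMDP S A) (μ : Policy S A) : PMF (Traj S A) :=
  (initPMF M).bind fun s => trajFrom M μ 1 M.H s

/-- Law of `n` i.i.d. draws from `q` (a dataset). -/
def iidPMF {τ : Type} (q : PMF τ) : ℕ → PMF (List τ)
  | 0 => PMF.pure []
  | n + 1 => q.bind fun x => (iidPMF q n).map fun l => x :: l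

/-- Total realized reward of a trajectory. -/
def retOf (T : Traj S A) : ℝ := (T.steps.map fun x => x.2.2).sum

variable [DecidableEq S] [DecidableEq A]

/-- State visited at step `h` (1-indexed). -/
def sOf (T : Traj S A) (h : ℕ) : Option S := (T.steps[h - 1]?).map Prod.fst

/-- Action taken at step `h`. -/
def aOf (T : Traj S A) (h : ℕ) : Option A := (T.steps[h - 1]?).map fun x => x.2.1

/-- Reward received at step `h`. -/
def rOf (T : Traj S A) (h : ℕ) : ℝ := ((T.steps[h - 1]?).map fun x => x.2.2).getD 0

/-- State reached after step `h`. -/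
def nxt (T : Traj S A) (h : ℕ) : S := ((T.steps[h]?).map Prod.fst).getD T.final

/-- Whether trajectory `T` visits `(s,a)` at step `h`. -/
def hitSA (T : Traj S A) (h : ℕ) (s : S) (a : A) : Bool :=
  decide (sOf T h = some s) && decide (aOf T h = some a)

/-- `n_{s,a}` at step `h`: number of episodes in `D` visiting `(s,a)` at step `h`. -/
def nCount (D : List (Traj S A)) (h : ℕ) (s : S) (a : A) : ℕ :=
  (D.filter fun T => hitSA T h s a).length

/-- Plug-in estimator of the transition kernel. -/
def Phat (D : List (Traj S A)) (h : ℕ) (s : S) (a : A) (s' : S) : ℝ :=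
  if nCount D h s a = 0 then (Fintype.card S : ℝ)⁻¹
  else ((D.filter fun T => hitSA T h s a && decide (nxt T h = s')).length : ℝ) / nCount D h s a

/-- Plug-in estimator of the mean reward. -/
def rhat (D : List (Traj S A)) (h : ℕ) (s : S) (a : A) : ℝ :=
  if nCount D h s a = 0 then 0
  else ((D.filter fun T => hitSA T h s a).map fun T => rOf T h).sum / nCount D h s a

/-- Empirical distribution of a list of samples. -/
def empDist (l : List S) (s : S) : ℝ := ((l.filter (· = s)).length : ℝ) / l.length

/-- An action maximizing `f`. -/
def argmaxA [Nonempty A] (f : A → ℝ) : A :=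
  Classical.choose (Finset.exists_max_image (Finset.univ : Finset A) f Finset.univ_nonempty)

/-- The (deterministic) greedy policy with respect to `Q`. -/
def greedy [Nonempty A] (Q : ℕ → S → A → ℝ) : Policy S A where
  p h s a := if a = argmaxA (Q h s) then 1 else 0
  nonneg := by intro h s a; split <;> norm_num
  sum_one := by intro h s; simp

/-- VPVI (Hoeffding-style) pessimism penalty `Γ_h(s,a) = C·H·ι/√(max(n_{s,a},1))`. -/
def vpviGamma (Hor : ℕ) (D : List (Traj S A)) (Cc δ : ℝ) (h : ℕ) (s : S) (a : A) : ℝ :=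
  Cc * Hor * iotaLog Hor (Fintype.card S) (Fintype.card A) δ /
    Real.sqrt ((max (nCount D h s a) 1 : ℕ) : ℝ)

/-- VPVI value estimates (computed backwards, with truncation and greedy maximization). -/
def vpviV [Nonempty A] (Hor : ℕ) (D : List (Traj S A)) (Cc δ : ℝ) (h : ℕ) : S → ℝ :=
  if hh : Hor + 1 ≤ h then fun _ => 0
  else fun s =>
    Finset.univ.sup' Finset.univ_nonempty fun a =>
      max 0 (min ((rhat D h s a + ∑ s', Phat D h s a s' * vpviV Hor D Cc δ (h + 1) s')
          - vpviGamma Hor D Cc δ h s a) ((Hor : ℝ) - h + 1))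
termination_by Hor + 1 - h
decreasing_by omega

/-- VPVI pessimistic truncated Q-estimates `Q̄_h`. -/
def vpviQbar [Nonempty A] (Hor : ℕ) (D : List (Traj S A)) (Cc δ : ℝ) (h : ℕ) (s : S) (a : A) :
    ℝ :=
  max 0 (min ((rhat D h s a + ∑ s', Phat D h s a s' * vpviV Hor D Cc δ (h + 1) s')
      - vpviGamma Hor D Cc δ h s a) ((Hor : ℝ) - h + 1))

/-- Output policy of VPVI. -/
def vpviPolicy [Nonempty A] (Hor : ℕ) (D : List (Traj S A)) (Cc δ : ℝ) : Policy S A :=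
  greedy (vpviQbar Hor D Cc δ)

/-- APVI Bernstein-style pessimism penalty. -/
def apviGamma (Hor : ℕ) (D : List (Traj S A)) (ι Cbig : ℝ) (h : ℕ) (s : S) (a : A)
    (Vnext : S → ℝ) : ℝ :=
  if nCount D h s a = 0 then Cbig * Hor * ι
  else 2 * Real.sqrt (varDist (Phat D h s a) (fun s' => rhat D h s a + Vnext s') * ι /
        nCount D h s a)
      + 14 * Hor * ι / (3 * nCount D h s a)

/-- APVI value estimates. -/
def apviV [Nonempty A] (Hor : ℕ) (D : List (Traj S A)) (ι Cbig : ℝ) (h : ℕ) : S → ℝ :=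
  if hh : Hor + 1 ≤ h then fun _ => 0
  else fun s =>
    Finset.univ.sup' Finset.univ_nonempty fun a =>
      max 0 (min ((rhat D h s a + ∑ s', Phat D h s a s' * apviV Hor D ι Cbig (h + 1) s')
          - apviGamma Hor D ι Cbig h s a (apviV Hor D ι Cbig (h + 1))) ((Hor : ℝ) - h + 1))
termination_by Hor + 1 - h
decreasing_by all_goals omega

/-- APVI pessimistic truncated Q-estimates `Q̄_h`. -/
def apviQbar [Nonempty A] (Hor : ℕ) (D : List (Traj S A)) (ι Cbig : ℝ) (h : ℕ) (s : S) (a : A) :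
    ℝ :=
  max 0 (min ((rhat D h s a + ∑ s', Phat D h s a s' * apviV Hor D ι Cbig (h + 1) s')
      - apviGamma Hor D ι Cbig h s a (apviV Hor D ι Cbig (h + 1))) ((Hor : ℝ) - h + 1))

/-- Output policy of APVI. -/
def apviPolicy [Nonempty A] (Hor : ℕ) (D : List (Traj S A)) (ι Cbig : ℝ) : Policy S A :=
  greedy (apviQbar Hor D ι Cbig)

/-- The pessimistic augmented MDP `M†` over states `Option S` (`none` is the absorbing state
`s†`): transitions/rewards agree with `M` on the covered set `Cov`, and all uncovered pairs as
well as `s†` transition deterministically to `s†` with reward `0`. -/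
def augMDP (M : FinMDP S A) (Cov : ℕ → S → A → Prop) : FinMDP (Option S) A where
  H := M.H
  P h os a os' :=
    match os, os' with
    | some s, some s' => if Cov h s a then M.P h s a s' else 0
    | some s, none => if Cov h s a then 0 else 1
    | none, some _ => 0
    | none, none => 1
  R h os a :=
    match os with
    | some s => if Cov h s a then M.R h s a else PMF.pure 0
    | none => PMF.pure 0
  d1 os := match os with | some s => M.d1 s | none => 0
  P_nonneg := by
    intro h os a os'
    rcases os with _ | s <;> rcases os' with _ | s' <;> dsimp only <;> try norm_num
    · split <;> norm_num
    · split
      · exact M.P_nonneg _ _ _ _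
      · norm_num
  P_sum := by
    intro h os a
    rcases os with _ | s
    · simp [Fintype.sum_option]
    · by_cases hc : Cov h s a <;> simp [Fintype.sum_option, hc, M.P_sum]
  R_mem := by
    intro h os a x hx
    rcases os with _ | s
    · simp only [PMF.support_pure, Set.mem_singleton_iff] at hx
      simp [hx]
    · by_cases hc : Cov h s a
      · exact M.R_mem h s a x (by simpa [hc] using hx)
      · simp only [hc, if_false, PMF.support_pure, Set.mem_singleton_iff] at hx
        simp [hx]
  d1_nonneg := by
    intro os; rcases os with _ | s
    · norm_num
    · exact M.d1_nonneg s
  d1_sum := by simp [Fintype.sum_option, M.d1_sum]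

/-- Extend a policy on `S` to `Option S` (arbitrarily: uniform at the absorbing state). -/
def liftPolicy [Nonempty A] (π : Policy S A) : Policy (Option S) A where
  p h os a := match os with | some s => π.p h s a | none => (Fintype.card A : ℝ)⁻¹
  nonneg := by
    intro h os a; rcases os with _ | s <;> dsimp only
    · positivity
    · exact π.nonneg _ _ _
  sum_one := by
    intro h os; rcases os with _ | s <;> dsimp only
    · rw [Finset.sum_const, Finset.card_univ, nsmul_eq_mul]
      exact mul_inv_cancel₀ (Nat.cast_ne_zero.mpr Fintype.card_ne_zero)
    · exact π.sum_one _ _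

/-- Restrict a policy on `Option S` to `S`. -/
def restrictPolicy (π : Policy (Option S) A) : Policy S A where
  p h s a := π.p h (some s) a
  nonneg h s a := π.nonneg h (some s) a
  sum_one h s := π.sum_one h (some s)

/-- Empirical transition kernel of the (data-version) pessimistic augmented MDP `M̂†`. -/
def PhatDag (D : List (Traj S A)) (h : ℕ) : Option S → A → Option S → ℝ
  | some s, a, some s' => if nCount D h s a = 0 then 0 else Phat D h s a s'
  | some s, a, none => if nCount D h s a = 0 then 1 else 0
  | none, _, some _ => 0
  | none, _, none => 1

/-- Empirical reward of the (data-version) pessimistic augmented MDP `M̂†`. -/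
def rhatDag (D : List (Traj S A)) (h : ℕ) : Option S → A → ℝ
  | some s, a => rhat D h s a
  | none, _ => 0

/-- Penalty of assumption-free APVI: Bernstein penalty on observed pairs, `0` otherwise. -/
def afGamma (Hor : ℕ) (D : List (Traj S A)) (ι : ℝ) (h : ℕ) (os : Option S) (a : A)
    (Vnext : Option S → ℝ) : ℝ :=
  match os with
  | some s =>
      if nCount D h s a = 0 then 0
      else 2 * Real.sqrt (varDist (PhatDag D h (some s) a)
            (fun os' => rhatDag D h (some s) a + Vnext os') * ι / nCount D h s a)
          + 14 * Hor * ι / (3 * nCount D h s a)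
  | none => 0

/-- Assumption-free APVI value estimates (on the empirical augmented MDP). -/
def afV [Nonempty A] (Hor : ℕ) (D : List (Traj S A)) (ι : ℝ) (h : ℕ) : Option S → ℝ :=
  if hh : Hor + 1 ≤ h then fun _ => 0
  else fun os =>
    Finset.univ.sup' Finset.univ_nonempty fun a =>
      max 0 (min ((rhatDag D h os a + ∑ os', PhatDag D h os a os' * afV Hor D ι (h + 1) os')
          - afGamma Hor D ι h os a (afV Hor D ι (h + 1))) ((Hor : ℝ) - h + 1))
termination_by Hor + 1 - h
decreasing_by all_goals omega

/-- Assumption-free APVI pessimistic truncated Q-estimates. -/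
def afQbar [Nonempty A] (Hor : ℕ) (D : List (Traj S A)) (ι : ℝ) (h : ℕ) (os : Option S) (a : A) :
    ℝ :=
  max 0 (min ((rhatDag D h os a + ∑ os', PhatDag D h os a os' * afV Hor D ι (h + 1) os')
      - afGamma Hor D ι h os a (afV Hor D ι (h + 1))) ((Hor : ℝ) - h + 1))

/-- Output policy of assumption-free APVI, on the augmented state space. -/
def afPolicyAug [Nonempty A] (Hor : ℕ) (D : List (Traj S A)) (ι : ℝ) : Policy (Option S) A :=
  greedy (afQbar Hor D ι)

/-- Output policy of assumption-free APVI, restricted to the original state space. -/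
def afPolicy [Nonempty A] (Hor : ℕ) (D : List (Traj S A)) (ι : ℝ) : Policy S A :=
  restrictPolicy (afPolicyAug Hor D ι)

/-- The local non-asymptotic minimax risk `𝔑_n(𝒫)` of an instance `𝒫 = (μ, M)`:
`sup_{𝒫' ∈ 𝒢} inf_{π̂} max_{𝒬 ∈ {𝒫,𝒫'}} √n · E_𝒬[v⋆(𝒬) − v^{π̂}]`. -/
def locRisk (n : ℕ) (μ : Policy S A) (M : FinMDP S A) : ℝ :=
  ⨆ Q : {q : Policy S A × FinMDP S A // inG q.1 q.2},
    ⨅ est : List (Traj S A) → Policy S A,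
      max (Real.sqrt n * pmfExp (iidPMF (episodePMF M μ) n) fun D => vstar M - vOf M (est D))
          (Real.sqrt n *
            pmfExp (iidPMF (episodePMF Q.1.2 Q.1.1) n) fun D => vstar Q.1.2 - vOf Q.1.2 (est D))

end

/-- The covered set `𝒞_h = {(s,a) : d^μ_h(s,a) > 0}` as a predicate. -/
def covSet {S A : Type} [Fintype S] [Fintype A] (M : FinMDP S A) (μ : Policy S A) :
    ℕ → S → A → Prop :=
  fun h s a => 0 < dOcc M μ h s a

/-!
Both values are sums of occupancy times mean reward over `t = 1, …, H`. On genuine states the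
occupancy of `M†` is dominated by that of `M`, and `M†` keeps the rewards of covered pairs and
zeroes the others, so `v^{†π} ≤ v^π`. Since rewards lie in `[0, 1]`, the reward lost at step `t` is
at most the mass that `M†` does not place on covered pairs at step `t`, and that mass is exactly
`d^{†π}_{t+1}(s†)`. Finally the absorbing mass grows at each step by the mass leaving the covered
set, which is bounded by the original occupancy of uncovered pairs.
-/

section Occupancy

open Finset

variable {S A : Type} [Fintype S] [Fintype A]

lemma pmfMean_pure (x : ℝ) : pmfMean (PMF.pure x) = x := by
  rw [pmfMean, tsum_eq_single x fun y hy => by simp [PMF.pure_apply, hy]]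
  simp

lemma pmfMean_mem_Icc {q : PMF ℝ} (hq : ∀ x ∈ q.support, x ∈ Set.Icc (0 : ℝ) 1) :
    pmfMean q ∈ Set.Icc (0 : ℝ) 1 := by
  have hterm : ∀ x, 0 ≤ (q x).toReal * x ∧ (q x).toReal * x ≤ (q x).toReal := by
    intro x
    by_cases hx : q x = 0
    · simp [hx]
    · obtain ⟨h0, h1⟩ := hq x ((PMF.mem_support_iff q x).2 hx)
      exact ⟨mul_nonneg ENNReal.toReal_nonneg h0, mul_le_of_le_one_right ENNReal.toReal_nonneg h1⟩
  have hsum : Summable fun x => (q x).toReal :=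
    ENNReal.summable_toReal (q.tsum_coe ▸ ENNReal.one_ne_top)
  refine ⟨tsum_nonneg fun x => (hterm x).1, ?_⟩
  calc pmfMean q ≤ ∑' x, (q x).toReal :=
        (hsum.of_nonneg_of_le (fun x => (hterm x).1) fun x => (hterm x).2).tsum_le_tsum
          (fun x => (hterm x).2) hsum
    _ = 1 := by rw [← ENNReal.tsum_toReal_eq q.apply_ne_top, q.tsum_coe, ENNReal.toReal_one]

lemma meanR_mem_Icc (M : FinMDP S A) (h : ℕ) (s : S) (a : A) :
    meanR M h s a ∈ Set.Icc (0 : ℝ) 1 :=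
  pmfMean_mem_Icc (M.R_mem h s a)

variable (M : FinMDP S A) (π : Policy S A)

lemma dState_succ {h : ℕ} (hh : 1 ≤ h) (s' : S) :
    dState M π (h + 1) s' = ∑ s, ∑ a, dState M π h s * π.p h s a * M.P h s a s' := by
  obtain ⟨m, rfl⟩ : ∃ m, h = m + 1 := ⟨h - 1, by omega⟩
  rfl

lemma dState_nonneg (h : ℕ) (s : S) : 0 ≤ dState M π h s := by
  induction h generalizing s with
  | zero => exact le_rfl
  | succ h ih =>
    rcases Nat.eq_zero_or_pos h with rfl | hh
    · exact M.d1_nonneg s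
    · rw [dState_succ M π hh]
      exact sum_nonneg fun s _ => sum_nonneg fun a _ =>
        mul_nonneg (mul_nonneg (ih s) (π.nonneg _ _ _)) (M.P_nonneg _ _ _ _)

lemma dOcc_nonneg (h : ℕ) (s : S) (a : A) : 0 ≤ dOcc M π h s a :=
  mul_nonneg (dState_nonneg M π h s) (π.nonneg h s a)

lemma sum_dOcc (h : ℕ) (s : S) : ∑ a, dOcc M π h s a = dState M π h s := by
  simp only [dOcc, ← mul_sum, π.sum_one, mul_one]

lemma sum_dState {h : ℕ} (hh : 1 ≤ h) : ∑ s, dState M π h s = 1 := by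
  induction h, hh using Nat.le_induction with
  | base => exact M.d1_sum
  | succ h hh ih =>
    simp only [dState_succ M π hh]
    rw [sum_comm, ← ih]
    refine sum_congr rfl fun s _ => ?_
    rw [sum_comm]
    simp only [← mul_sum, M.P_sum, π.sum_one, mul_one]

lemma Vpi_of_le {h : ℕ} (hh : h ≤ M.H) (s : S) :
    Vpi M π h s = ∑ a, π.p h s a * (meanR M h s a + ∑ s', M.P h s a s' * Vpi M π (h + 1) s') := by
  rw [Vpi, dif_neg (by omega)]

lemma Vpi_of_lt {h : ℕ} (hh : M.H < h) (s : S) : Vpi M π h s = 0 := by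
  rw [Vpi, dif_pos (by omega : M.H + 1 ≤ h)]

lemma sum_dState_mul_Vpi_eq_add {h : ℕ} (h1 : 1 ≤ h) (hh : h ≤ M.H) :
    ∑ s, dState M π h s * Vpi M π h s =
      ∑ s, ∑ a, dOcc M π h s a * meanR M h s a +
        ∑ s', dState M π (h + 1) s' * Vpi M π (h + 1) s' := by
  simp only [Vpi_of_le M π hh, dState_succ M π h1, mul_sum, mul_add, sum_add_distrib, sum_mul,
    dOcc, mul_assoc]
  congr 1
  exact (sum_congr rfl fun s _ => sum_comm).trans sum_comm

lemma sum_dState_mul_Vpi {h : ℕ} (h1 : 1 ≤ h) :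
    ∑ s, dState M π h s * Vpi M π h s =
      ∑ t ∈ Icc h M.H, ∑ s, ∑ a, dOcc M π t s a * meanR M t s a := by
  by_cases hh : h ≤ M.H
  · rw [sum_dState_mul_Vpi_eq_add M π h1 hh, sum_dState_mul_Vpi (by omega : 1 ≤ h + 1),
      Icc_add_one_left_eq_Ioc, add_comm, sum_Ioc_add_eq_sum_Icc hh]
  · simp [Vpi_of_lt M π (not_le.1 hh), Icc_eq_empty hh]
termination_by M.H + 1 - h

lemma vOf_eq_sum_dOcc_mul_meanR :
    vOf M π = ∑ t ∈ Icc 1 M.H, ∑ s, ∑ a, dOcc M π t s a * meanR M t s a :=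
  sum_dState_mul_Vpi M π le_rfl

end Occupancy

@[simp] lemma liftPolicy_p_some {S A : Type} [Fintype A] [Nonempty A] (π : Policy S A)
    (h : ℕ) (s : S) (a : A) : (liftPolicy π).p h (some s) a = π.p h s a := rfl

section AugmentedMDP

open Finset

variable {S A : Type} [Fintype S] [Fintype A] (M : FinMDP S A) (Cov : ℕ → S → A → Prop)

local notation "M†" => augMDP M Cov

@[simp] lemma augMDP_H : (M†).H = M.H := rfl

@[simp] lemma augMDP_P_some_some (h : ℕ) (s : S) (a : A) (s' : S) :
    (M†).P h (some s) a (some s') = if Cov h s a then M.P h s a s' else 0 := rfl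

@[simp] lemma augMDP_P_none_some (h : ℕ) (a : A) (s' : S) : (M†).P h none a (some s') = 0 := rfl

@[simp] lemma augMDP_P_some_none (h : ℕ) (s : S) (a : A) :
    (M†).P h (some s) a none = if Cov h s a then 0 else 1 := rfl

@[simp] lemma augMDP_P_none_none (h : ℕ) (a : A) : (M†).P h none a none = 1 := rfl

lemma augMDP_meanR_some (h : ℕ) (s : S) (a : A) :
    meanR M† h (some s) a = if Cov h s a then meanR M h s a else 0 := by
  show pmfMean (if Cov h s a then M.R h s a else PMF.pure 0) = _
  split_ifs
  · rfl
  · exact pmfMean_pure 0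

lemma augMDP_meanR_none (h : ℕ) (a : A) : meanR M† h none a = 0 := pmfMean_pure 0

variable [Nonempty A] (π : Policy S A)

local notation "π†" => liftPolicy π

lemma augMDP_dState_some_le (h : ℕ) (s : S) : dState M† π† h (some s) ≤ dState M π h s := by
  induction h generalizing s with
  | zero => exact le_rfl
  | succ h ih =>
    rcases Nat.eq_zero_or_pos h with rfl | hh
    · exact le_rfl
    rw [dState_succ _ _ hh, dState_succ _ _ hh, Fintype.sum_option]
    simp only [augMDP_P_none_some, augMDP_P_some_some, mul_zero, sum_const_zero, zero_add,
      liftPolicy_p_some]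
    refine sum_le_sum fun s₀ _ => sum_le_sum fun a _ => ?_
    split_ifs
    · exact mul_le_mul_of_nonneg_right (mul_le_mul_of_nonneg_right (ih s₀) (π.nonneg _ _ _))
        (M.P_nonneg _ _ _ _)
    · rw [mul_zero]
      exact mul_nonneg (dOcc_nonneg M π _ _ _) (M.P_nonneg _ _ _ _)

lemma augMDP_dOcc_some_le (h : ℕ) (s : S) (a : A) : dOcc M† π† h (some s) a ≤ dOcc M π h s a :=
  mul_le_mul_of_nonneg_right (augMDP_dState_some_le M Cov π h s) (π.nonneg h s a)

lemma augMDP_dState_none_succ {h : ℕ} (hh : 1 ≤ h) :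
    dState M† π† (h + 1) none =
      dState M† π† h none + ∑ s, ∑ a, if Cov h s a then 0 else dOcc M† π† h (some s) a := by
  rw [dState_succ _ _ hh, Fintype.sum_option]
  congr 1
  · simp only [augMDP_P_none_none, mul_one, ← mul_sum, (π†).sum_one]
  · refine sum_congr rfl fun s _ => sum_congr rfl fun a _ => ?_
    split_ifs <;> simp [*, dOcc]

lemma augMDP_dState_none_add_sum_some {h : ℕ} (hh : 1 ≤ h) :
    dState M† π† h none + ∑ s, dState M† π† h (some s) = 1 := by
  rw [← sum_dState M† π† hh, Fintype.sum_option]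

lemma augMDP_sum_dOcc_mul_meanR (t : ℕ) :
    ∑ os, ∑ a, dOcc M† π† t os a * meanR M† t os a =
      ∑ s, ∑ a, if Cov t s a then dOcc M† π† t (some s) a * meanR M t s a else 0 := by
  simp [Fintype.sum_option, augMDP_meanR_none, augMDP_meanR_some, mul_ite]

lemma augMDP_sum_dOcc_mul_meanR_le (t : ℕ) :
    ∑ os, ∑ a, dOcc M† π† t os a * meanR M† t os a ≤
      ∑ s, ∑ a, dOcc M π t s a * meanR M t s a := by
  rw [augMDP_sum_dOcc_mul_meanR]
  gcongr with s _ a _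
  have hr := meanR_mem_Icc M t s a
  split_ifs
  · exact mul_le_mul_of_nonneg_right (augMDP_dOcc_some_le M Cov π t s a) hr.1
  · exact mul_nonneg (dOcc_nonneg M π t s a) hr.1

lemma sum_dOcc_mul_meanR_sub_augMDP_le {t : ℕ} (ht : 1 ≤ t) :
    ∑ s, ∑ a, dOcc M π t s a * meanR M t s a - ∑ os, ∑ a, dOcc M† π† t os a * meanR M† t os a ≤
      dState M† π† (t + 1) none := by
  set dC : S → A → ℝ := fun s a => if Cov t s a then dOcc M† π† t (some s) a else 0
  set dU : S → A → ℝ := fun s a => if Cov t s a then 0 else dOcc M† π† t (some s) a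
  have hterm : ∀ s a, dOcc M π t s a * meanR M t s a -
      (if Cov t s a then dOcc M† π† t (some s) a * meanR M t s a else 0) ≤
        dOcc M π t s a - dC s a := by
    intro s a
    obtain ⟨hr0, hr1⟩ := meanR_mem_Icc M t s a
    have hle := augMDP_dOcc_some_le M Cov π t s a
    have h0 := dOcc_nonneg M† π† t (some s) a
    have h0' := dOcc_nonneg M π t s a
    simp only [dC]
    split_ifs <;> nlinarith
  have hmass : ∑ s, ∑ a, dC s a = 1 - dState M† π† t none - ∑ s, ∑ a, dU s a := by
    have hsplit : ∀ s a, dC s a + dU s a = dOcc M† π† t (some s) a := fun s a => by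
      simp only [dC, dU]; split_ifs <;> simp
    have hsome : ∑ s, dState M† π† t (some s) = ∑ s, ∑ a, dC s a + ∑ s, ∑ a, dU s a := by
      simp only [← sum_add_distrib, hsplit, sum_dOcc]
    linarith [augMDP_dState_none_add_sum_some M Cov π ht]
  calc _ ≤ ∑ s, ∑ a, (dOcc M π t s a - dC s a) := by
        rw [augMDP_sum_dOcc_mul_meanR, ← sum_sub_distrib]
        refine sum_le_sum fun s _ => ?_
        rw [← sum_sub_distrib]
        exact sum_le_sum fun a _ => hterm s a
    _ = dState M† π† t none + ∑ s, ∑ a, dU s a := by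
        simp only [sum_sub_distrib, sum_dOcc, sum_dState M π ht, hmass]
        ring
    _ = dState M† π† (t + 1) none := (augMDP_dState_none_succ M Cov π ht).symm

lemma vOf_sub_vOf_augMDP_le :
    vOf M π - vOf M† π† ≤ ∑ h ∈ Icc 2 (M.H + 1), dState M† π† h none := by
  rw [vOf_eq_sum_dOcc_mul_meanR, vOf_eq_sum_dOcc_mul_meanR, augMDP_H, ← sum_sub_distrib,
    ← map_add_right_Icc 1 M.H 1, sum_map]
  exact sum_le_sum fun t ht => sum_dOcc_mul_meanR_sub_augMDP_le M Cov π (mem_Icc.1 ht).1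

lemma vOf_augMDP_le : vOf M† π† ≤ vOf M π := by
  rw [vOf_eq_sum_dOcc_mul_meanR, vOf_eq_sum_dOcc_mul_meanR, augMDP_H]
  exact sum_le_sum fun t _ => augMDP_sum_dOcc_mul_meanR_le M Cov π t

lemma augMDP_dState_none_le (k : ℕ) :
    dState M† π† (k + 1) none ≤
      ∑ t ∈ Icc 1 k, ∑ s, ∑ a, if ¬ Cov t s a then dOcc M π t s a else 0 := by
  induction k with
  | zero => exact le_rfl
  | succ k ih =>
    rw [augMDP_dState_none_succ M Cov π (by omega), sum_Icc_succ_top (by omega)]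
    gcongr with s _ a _
    split_ifs
    · exact le_rfl
    · exact augMDP_dOcc_some_le M Cov π _ s a

end AugmentedMDP

/-- **Theorem (sandwich inequality for the pessimistic augmented MDP).**
For any policy `π`, the values of the pessimistic augmented MDP `M†` and of the original MDP
`M` satisfy
`v^π − Σ_{h=2}^{H+1} Σ_{t=1}^{h−1} Σ_{(s,a)∉𝒞_t} d^π_t(s,a)
  ≤ v^π − Σ_{h=2}^{H+1} d^{†π}_h(s†_h) ≤ v^{†π} ≤ v^π`. -/
theorem aug_mdp_sandwich :
    ∀ (S A : Type) [Fintype S] [Fintype A] [DecidableEq S] [DecidableEq A]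
      [Nonempty S] [Nonempty A]
      (M : FinMDP S A) (μ π : Policy S A),
      vOf M π -
          ∑ h ∈ Finset.Icc 2 (M.H + 1), ∑ t ∈ Finset.Icc 1 (h - 1), ∑ s, ∑ a,
            (if ¬ 0 < dOcc M μ t s a then dOcc M π t s a else 0)
        ≤ vOf M π -
            ∑ h ∈ Finset.Icc 2 (M.H + 1), dState (augMDP M (covSet M μ)) (liftPolicy π) h none ∧
      vOf M π -
          ∑ h ∈ Finset.Icc 2 (M.H + 1), dState (augMDP M (covSet M μ)) (liftPolicy π) h none
        ≤ vOf (augMDP M (covSet M μ)) (liftPolicy π) ∧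
      vOf (augMDP M (covSet M μ)) (liftPolicy π) ≤ vOf M π := by
  intro S A _ _ _ _ _ _ M μ π
  refine ⟨?_, by linarith [vOf_sub_vOf_augMDP_le M (covSet M μ) π],
    vOf_augMDP_le M (covSet M μ) π⟩
  gcongr with h hh
  obtain ⟨k, rfl⟩ : ∃ k, h = k + 1 := ⟨h - 1, by grind⟩
  simpa [covSet] using augMDP_dState_none_le M (covSet M μ) π k
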